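/- arXiv:1804.03941 — 2 statements merged into one kernel-verified Lean document; each statement's English description precedes it below -/
import Mathlib

section
/- Let 0 → A → G → B → 0 be a short exact sequence of topological groups in which the surjection π : G → B is a continuous open map, the inclusion A → G is a topological embedding onto ker(π), and both A and B are profinite. Then G is profinite. -/
/-!
The kernel `ker π ≅ A` is compact, so `π` is a closed map with compact fibres, i.e. proper, and
`G` is compact because `B` is. Since `B` is Hausdorff, `ker π` is closed, so `ι` is a closed
embedding and `{1} = ι {1}` is closed, which makes `G` Hausdorff. A connected subset of `G`
maps to a point of `B`, hence lies in a coset `g · ker π ≅ A`, and is therefore a point.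
-/

open Set Topology Pointwise

theorem MonoidHom.preimage_image_eq_mul_ker {G H : Type*} [Group G] [Group H] (f : G →* H)
    (s : Set G) : f ⁻¹' (f '' s) = s * f.ker := by
  ext x
  simp only [mem_preimage, mem_image, mem_mul, SetLike.mem_coe, MonoidHom.mem_ker]
  constructor
  · rintro ⟨c, hc, hcx⟩
    exact ⟨c, hc, c⁻¹ * x, by simp [hcx], mul_inv_cancel_left c x⟩
  · rintro ⟨c, hc, k, hk, rfl⟩
    exact ⟨c, hc, by simp [hk]⟩

section CompactKernel

variable {G H : Type*} [Group G] [TopologicalSpace G] [IsTopologicalGroup G]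
  [Group H] [TopologicalSpace H]

theorem MonoidHom.isClosedMap_of_isCompact_ker (f : G →* H) (hf : IsQuotientMap f)
    (hK : IsCompact (f.ker : Set G)) : IsClosedMap f := by
  intro C hC
  rw [← hf.isClosed_preimage, f.preimage_image_eq_mul_ker]
  exact hC.mul_right_of_isCompact hK

theorem MonoidHom.isProperMap_of_isCompact_ker (f : G →* H) (hf : IsQuotientMap f)
    (hK : IsCompact (f.ker : Set G)) : IsProperMap f := by
  refine isProperMap_iff_isClosedMap_and_compact_fibers.mpr
    ⟨hf.continuous, f.isClosedMap_of_isCompact_ker hf hK, fun y ↦ ?_⟩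
  obtain ⟨g, rfl⟩ := hf.surjective y
  rw [← image_singleton, f.preimage_image_eq_mul_ker]
  exact isCompact_singleton.mul hK

end CompactKernel

theorem MonoidHom.t2Space_of_isClosedEmbedding {A G : Type*} [Group A] [TopologicalSpace A]
    [T1Space A] [Group G] [TopologicalSpace G] [IsTopologicalGroup G] (ι : A →* G)
    (hι : IsClosedEmbedding ι) : T2Space G := by
  rw [IsTopologicalGroup.t2Space_iff_one_closed]
  have h : ({1} : Set G) = ι '' {1} := by rw [image_singleton, map_one]
  rw [h]
  exact hι.isClosedMap _ isClosed_singleton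

theorem totallyDisconnectedSpace_of_isTotallyDisconnected_fiber {X Y : Type*}
    [TopologicalSpace X] [TopologicalSpace Y] [TotallyDisconnectedSpace Y] {f : X → Y}
    (hf : Continuous f) (hfib : ∀ y, IsTotallyDisconnected (f ⁻¹' {y})) :
    TotallyDisconnectedSpace X := by
  refine ⟨fun t _ ht ↦ ?_⟩
  rcases t.eq_empty_or_nonempty with rfl | ⟨x, hx⟩
  · exact subsingleton_empty
  have hft : (f '' t).Subsingleton := (ht.image f hf.continuousOn).subsingleton
  refine hfib (f x) t (fun z hz ↦ ?_) ht
  exact hft (mem_image_of_mem f hz) (mem_image_of_mem f hx)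

theorem stmt_3_general {A G B : Type*}
    [Group A] [TopologicalSpace A]
    [CompactSpace A] [T2Space A] [TotallyDisconnectedSpace A]
    [Group G] [TopologicalSpace G] [IsTopologicalGroup G]
    [Group B] [TopologicalSpace B]
    [CompactSpace B] [T2Space B] [TotallyDisconnectedSpace B]
    (ι : A →* G) (π : G →* B)
    (hι : Topology.IsEmbedding ι) (hrange : ι.range = π.ker)
    (hπc : Continuous π) (hπo : IsOpenMap π) (hπs : Function.Surjective π) :
    CompactSpace G ∧ T2Space G ∧ TotallyDisconnectedSpace G := by
  have hker : (π.ker : Set G) = range ι := by rw [← hrange, MonoidHom.coe_range]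
  have hKcompact : IsCompact (π.ker : Set G) := hker ▸ isCompact_range hι.continuous
  have hproper : IsProperMap π :=
    π.isProperMap_of_isCompact_ker (hπo.isQuotientMap hπc hπs) hKcompact
  have hKclosed : IsClosed (π.ker : Set G) := isClosed_singleton.preimage hπc
  refine ⟨⟨by simpa using hproper.isCompact_preimage (isCompact_univ (X := B))⟩,
    ι.t2Space_of_isClosedEmbedding ⟨hι, hker ▸ hKclosed⟩,
    totallyDisconnectedSpace_of_isTotallyDisconnected_fiber hπc fun b ↦ ?_⟩
  obtain ⟨g, rfl⟩ := hπs b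
  have hfiber : π ⁻¹' {π g} = range ((g * ·) ∘ ι) := by
    rw [← image_singleton, π.preimage_image_eq_mul_ker, singleton_mul, hker, range_comp]
  rw [hfiber]
  exact ((Homeomorph.mulLeft g).isEmbedding.comp hι).isTotallyDisconnected_range.mpr inferInstance

/-- If `0 → A → G → B → 0` is a short exact sequence of topological groups, where the
surjection `π : G → B` is continuous and open, the injection `ι : A → G` is a topological
embedding onto `ker π`, and both `A` and `B` are profinite (compact, Hausdorff, totally
disconnected), then `G` is profinite. -/
theorem stmt_3 {A G B : Type*}
    [Group A] [TopologicalSpace A] [IsTopologicalGroup A]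
    [CompactSpace A] [T2Space A] [TotallyDisconnectedSpace A]
    [Group G] [TopologicalSpace G] [IsTopologicalGroup G]
    [Group B] [TopologicalSpace B] [IsTopologicalGroup B]
    [CompactSpace B] [T2Space B] [TotallyDisconnectedSpace B]
    (ι : A →* G) (π : G →* B)
    (hι : Topology.IsEmbedding ι) (hrange : ι.range = π.ker)
    (hπc : Continuous π) (hπo : IsOpenMap π) (hπs : Function.Surjective π) :
    CompactSpace G ∧ T2Space G ∧ TotallyDisconnectedSpace G :=
  stmt_3_general ι π hι hrange hπc hπo hπs
end

section
/- Let 𝒜 be an abelian category and consider a commutative square of bounded-below cochain complexes f : A → A', α : A → B ⊕ E, α' : A' → B ⊕ E', and (id_B, g) : B ⊕ E → B ⊕ E' with α' ∘ f = (id_B, g) ∘ α. If the induced morphism of mapping cones Cone(f) → Cone(g) is a quasi-isomorphism, then the induced morphism Cone(α) → Cone(α') is a quasi-isomorphism. -/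
/-!
The cone of `𝟙 B` is contractible, so the cone of `𝟙 B ⊞ g` is homotopy equivalent to the cone
of `g`, and the hypothesis says that `Cone f ⟶ Cone (𝟙 B ⊞ g)` is a quasi-isomorphism.

For a commutative square `φ₁ ≫ b = a ≫ φ₂` the map `Cone φ₁ ⟶ Cone φ₂` factors through
`Cone (a ≫ φ₂)`. The two steps have cones `Cone b` and `(Cone a)⟦1⟧`, and the octahedral axiom in
the derived category shows that the cone of the composite is zero as soon as the induced map
`Cone a ⟶ Cone b` is an isomorphism there. This "transposition" of the square, applied to the
square with sides `f` and `α`, gives the theorem.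
-/

open CategoryTheory Limits CochainComplex

namespace CochainComplex.mappingCone

variable {C : Type*} [Category C] [Preadditive C] [HasBinaryBiproducts C]

lemma map_add {K₁ L₁ K₂ L₂ : CochainComplex C ℤ} (φ₁ : K₁ ⟶ L₁) (φ₂ : K₂ ⟶ L₂)
    (a a' : K₁ ⟶ K₂) (b b' : L₁ ⟶ L₂) (comm : φ₁ ≫ b = a ≫ φ₂) (comm' : φ₁ ≫ b' = a' ≫ φ₂) :
    map φ₁ φ₂ (a + a') (b + b')
      (by rw [Preadditive.comp_add, comm, comm', Preadditive.add_comp]) =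
    map φ₁ φ₂ a b comm + map φ₁ φ₂ a' b' comm' := by
  ext n
  simp [ext_from_iff _ (n + 1) n rfl, map]

variable (B : CochainComplex C ℤ) {E E' : CochainComplex C ℤ} (g : E ⟶ E')

noncomputable def homotopyZeroOfFactorsThroughMappingConeId {X Y : CochainComplex C ℤ}
    (a : X ⟶ mappingCone (𝟙 B)) (b : mappingCone (𝟙 B) ⟶ Y) : Homotopy (a ≫ b) 0 :=
  (Homotopy.ofEq (by simp)).trans
    ((((homotopyToZeroOfId B).compRight b).compLeft a).trans (Homotopy.ofEq (by simp)))

lemma map_fst_comp_map_inl_add_map_snd_comp_map_inr :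
    map (biprod.map (𝟙 B) g) (𝟙 B) biprod.fst biprod.fst (by simp) ≫
        map (𝟙 B) (biprod.map (𝟙 B) g) biprod.inl biprod.inl (by simp) +
      map (biprod.map (𝟙 B) g) g biprod.snd biprod.snd (by simp) ≫
        map g (biprod.map (𝟙 B) g) biprod.inr biprod.inr (by simp) = 𝟙 _ := by
  rw [← map_comp, ← map_comp, ← map_add, ← map_id]
  simp only [biprod.total]

@[simps hom]
noncomputable def biprodMapIdHomotopyEquiv :
    HomotopyEquiv (mappingCone (biprod.map (𝟙 B) g)) (mappingCone g) where
  hom := map _ g biprod.snd biprod.snd (by simp)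
  inv := map g _ biprod.inr biprod.inr (by simp)
  homotopyHomInvId := (Homotopy.ofEq (zero_add _).symm).trans
    (((homotopyZeroOfFactorsThroughMappingConeId B _ _).symm.add (Homotopy.refl _)).trans
      (Homotopy.ofEq (map_fst_comp_map_inl_add_map_snd_comp_map_inr B g)))
  homotopyInvHomId := Homotopy.ofEq (by rw [← map_comp]; simpa using map_id g)

end CochainComplex.mappingCone

namespace CategoryTheory.Triangulated

open Pretriangulated

variable {D : Type*} [Category D] [Preadditive D] [HasZeroObject D] [HasShift D ℤ]
  [∀ n : ℤ, (shiftFunctor D n).Additive] [Pretriangulated D] [IsTriangulated D]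

lemma isIso_comp_of_isIso_fiber_comp_cone {X Y W Z₀ Z₁ : D} {u : X ⟶ Y} {v : Y ⟶ W}
    {v₁ : Y ⟶ Z₁} {w₁ : Z₁ ⟶ X⟦(1 : ℤ)⟧} {u₀ : Z₀ ⟶ Y} {w₀ : W ⟶ Z₀⟦(1 : ℤ)⟧}
    (h₁ : Triangle.mk u v₁ w₁ ∈ distTriang D) (h₀ : Triangle.mk u₀ v w₀ ∈ distTriang D)
    (h : IsIso (u₀ ≫ v₁)) : IsIso (u ≫ v) := by
  obtain ⟨Z, v₁₃, w₁₃, h₁₃⟩ := distinguished_cocone_triangle (u ≫ v)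
  have O := someOctahedron rfl h₁ (rot_of_distTriang _ h₀) h₁₃
  refine (Triangle.isZero₃_iff_isIso₁ _ h₁₃).1 (Triangle.isZero₂_of_isIso₃ _ O.mem ?_)
  -- the octahedron on `u ≫ v` relates the cones of `u` and of `v` through `-(u₀ ≫ v₁)⟦1⟧'`
  show IsIso ((-u₀⟦(1 : ℤ)⟧') ≫ v₁⟦(1 : ℤ)⟧')
  rw [Preadditive.neg_comp, ← Functor.map_comp]
  exact ⟨-inv ((u₀ ≫ v₁)⟦(1 : ℤ)⟧'), by simp, by simp⟩

end CategoryTheory.Triangulated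

lemma HomotopyCategory.mappingConeCompTriangleh_distinguished_of_eq {C : Type*} [Category C]
    [Preadditive C] [HasZeroObject C] [HasBinaryBiproducts C] {X₁ X₂ X₃ : CochainComplex C ℤ}
    (f : X₁ ⟶ X₂) (g : X₂ ⟶ X₃) (fg : X₁ ⟶ X₃) (h : f ≫ g = fg) :
    (quotient C (ComplexShape.up ℤ)).mapTriangle.obj
      (Pretriangulated.Triangle.mk (mappingCone.map f fg (𝟙 X₁) g (by rw [Category.id_comp, h]))
        (mappingCone.map fg g f (𝟙 X₃) (by rw [Category.comp_id, h]))
        ((mappingCone.triangle g).mor₃ ≫ (mappingCone.inr f)⟦(1 : ℤ)⟧')) ∈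
      distTriang (HomotopyCategory C (ComplexShape.up ℤ)) := by
  subst h
  exact mappingConeCompTriangleh_distinguished f g

namespace CochainComplex

variable {C : Type*} [Category C] [Abelian C]

lemma quasiIso_iff_isIso_Qh_map [HasDerivedCategory C] {K L : CochainComplex C ℤ} (φ : K ⟶ L) :
    QuasiIso φ ↔ IsIso (DerivedCategory.Qh.map ((HomotopyCategory.quotient C _).map φ)) :=
  ((DerivedCategory.isIso_Qh_map_iff _).trans
    (HomotopyCategory.quotient_map_mem_quasiIso_iff φ)).symm

lemma mappingCone.quasiIso_map_of_quasiIso_map_transpose {K₁ L₁ K₂ L₂ : CochainComplex C ℤ}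
    (φ₁ : K₁ ⟶ L₁) (φ₂ : K₂ ⟶ L₂) (a : K₁ ⟶ K₂) (b : L₁ ⟶ L₂) (comm : φ₁ ≫ b = a ≫ φ₂)
    (h : QuasiIso (map a b φ₁ φ₂ comm.symm)) : QuasiIso (map φ₁ φ₂ a b comm) := by
  let := HasDerivedCategory.standard C
  have huv : map φ₁ φ₂ a b comm = map φ₁ (a ≫ φ₂) (𝟙 K₁) b (by rw [Category.id_comp, comm]) ≫
      map (a ≫ φ₂) φ₂ a (𝟙 L₂) (by rw [Category.comp_id]) := by
    rw [← map_comp]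
    simp only [Category.id_comp, Category.comp_id]
  have hu₀v₁ : map a b φ₁ φ₂ comm.symm = map a (a ≫ φ₂) (𝟙 K₁) φ₂ (by rw [Category.id_comp]) ≫
      map (a ≫ φ₂) b φ₁ (𝟙 L₂) (by rw [Category.comp_id, comm]) := by
    rw [← map_comp]
    simp only [Category.id_comp, Category.comp_id]
  rw [hu₀v₁, quasiIso_iff_isIso_Qh_map, Functor.map_comp, Functor.map_comp] at h
  rw [huv, quasiIso_iff_isIso_Qh_map, Functor.map_comp, Functor.map_comp]
  exact Triangulated.isIso_comp_of_isIso_fiber_comp_cone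
    (DerivedCategory.Qh.map_distinguished _
      (HomotopyCategory.mappingConeCompTriangleh_distinguished_of_eq φ₁ b _ comm))
    (DerivedCategory.Qh.map_distinguished _
      (HomotopyCategory.mappingConeCompTriangleh_distinguished_of_eq a φ₂ _ rfl)) h

end CochainComplex

/-- Given a commutative square of bounded-below cochain complexes
`f : A ⟶ A'`, `α : A ⟶ B ⊞ E`, `α' : A' ⟶ B ⊞ E'`, `(id_B, g) : B ⊞ E ⟶ B ⊞ E'`,
if the induced morphism `Cone(f) ⟶ Cone(g)` is a quasi-isomorphism, then the induced
morphism `Cone(α) ⟶ Cone(α')` is a quasi-isomorphism. -/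
theorem stmt_7 {𝒜 : Type*} [Category 𝒜] [Abelian 𝒜]
    (A A' B E E' : CochainComplex 𝒜 ℤ)
    (f : A ⟶ A') (g : E ⟶ E') (α : A ⟶ B ⊞ E) (α' : A' ⟶ B ⊞ E')
    (hcomm : α ≫ biprod.map (𝟙 B) g = f ≫ α')
    (hqis : QuasiIso (mappingCone.map f g (α ≫ biprod.snd) (α' ≫ biprod.snd)
      (by rw [← Category.assoc, ← hcomm]; simp))) :
    QuasiIso (mappingCone.map α α' f (biprod.map (𝟙 B) g) hcomm) := by
  have hqis' : QuasiIso (mappingCone.map f (biprod.map (𝟙 B) g) α α' hcomm.symm) := by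
    rw [← quasiIso_iff_comp_right _ (mappingCone.biprodMapIdHomotopyEquiv B g).hom,
      mappingCone.biprodMapIdHomotopyEquiv_hom, ← mappingCone.map_comp]
    exact hqis
  exact mappingCone.quasiIso_map_of_quasiIso_map_transpose α α' f _ hcomm hqis'
end
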